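/- arXiv:2403.15125 — 6 statements merged into one kernel-verified Lean document; each statement's English description precedes it below -/
import Mathlib

section
/- Green's formula: let b be a weighted graph over the discrete measure space (X,m) with m: X → (0,∞), and let ℒf(x) = (1/m(x)) Σ_y b(x,y)(f(x)-f(y)) be the formal Laplacian. If f: X → ℝ has finite energy Q(f) < ∞ and φ: X → ℝ has finite support, then Σ_y b(x,y)|f(y)| < ∞ for all x, and Q(f,φ) = Σ_x (ℒf)(x) φ(x) m(x), where Q(f,φ) = (1/2) Σ_{x,y} b(x,y)(f(x)-f(y))(φ(x)-φ(y)). -/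
/-!
Finite energy gives, for every `x`, summability of `y ↦ b(x,y)(f(x)-f(y))²`, hence (by
`2|t| ≤ 1 + t²` and `Σ_y b(x,y) < ∞`) of `y ↦ b(x,y)|f(x)-f(y)|`, and so of `y ↦ b(x,y)|f(y)|`.
Since `ψ` has finite support, `(x,y) ↦ b(x,y)(f(x)-f(y))ψ(x)` is then absolutely summable on `X × X`.
The symmetry of `b` turns the part of `Q(f,ψ)` containing `ψ(y)` into a copy of the part containing
`ψ(x)`, so `Q(f,ψ) = Σ_x Σ_y b(x,y)(f(x)-f(y))ψ(x) = Σ_x ℒf(x)ψ(x)m(x)`.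
-/

open Filter Topology
open scoped ENNReal

variable {X : Type*}

/-- The graph energy functional `Q(f) = (1/2) Σ_{x,y} b(x,y)(f(x)-f(y))²`, valued in `[0,∞]`. -/
noncomputable def graphEnergy (b : X → X → ℝ) (f : X → ℝ) : ℝ≥0∞ :=
  (1 / 2 : ℝ≥0∞) * ∑' p : X × X, ENNReal.ofReal (b p.1 p.2 * (f p.1 - f p.2) ^ 2)

/-- The bilinear graph energy form `Q(f,g)`. -/
noncomputable def energyBil (b : X → X → ℝ) (f g : X → ℝ) : ℝ :=
  (1 / 2 : ℝ) * ∑' p : X × X, b p.1 p.2 * (f p.1 - f p.2) * (g p.1 - g p.2)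

/-- The formal graph Laplacian `ℒ f(x) = (1/m(x)) Σ_y b(x,y)(f(x)-f(y))`. -/
noncomputable def formalLap (b : X → X → ℝ) (m : X → ℝ) (f : X → ℝ) (x : X) : ℝ :=
  (∑' y, b x y * (f x - f y)) / m x

/-- Membership in `D₀`: approximability by finitely supported functions pointwise and in energy. -/
def MemD0 (b : X → X → ℝ) (u : X → ℝ) : Prop :=
  ∃ g : ℕ → X → ℝ, (∀ n, (Function.support (g n)).Finite) ∧
    (∀ x, Tendsto (fun n => g n x) atTop (𝓝 (u x))) ∧
    Tendsto (fun n => graphEnergy b (u - g n)) atTop (𝓝 0)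

/-- `Φ(s) = ∫₀^s 2φ(t) dt`. -/
noncomputable def PhiFn (φ : ℝ → ℝ) (s : ℝ) : ℝ := ∫ t in (0:ℝ)..s, 2 * φ t

/-- `κ_f(u) = Σ_x Φ(f(x) - W(x)u(x)) m(x)/W(x)`. -/
noncomputable def kappa (φ : ℝ → ℝ) (W m : X → ℝ) (f u : X → ℝ) : ℝ≥0∞ :=
  ∑' x, ENNReal.ofReal (PhiFn φ (f x - W x * u x) * (m x / W x))

/-- The functional `E_f(u) = Q₀(u) + κ_f(u)`. -/
noncomputable def Efun (b : X → X → ℝ) (m : X → ℝ) (φ : ℝ → ℝ) (W : X → ℝ)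
    (f u : X → ℝ) : ℝ≥0∞ :=
  graphEnergy b u + kappa φ W m f u

/-- The domain of `E_f`: functions in `D₀` with `κ_f(u) < ∞`. -/
def EDom (b : X → X → ℝ) (m : X → ℝ) (φ : ℝ → ℝ) (W : X → ℝ) (f u : X → ℝ) : Prop :=
  MemD0 b u ∧ kappa φ W m f u ≠ ⊤

/-- `u` is a minimizer of `E_f` over its domain. -/
def Minimizes (b : X → X → ℝ) (m : X → ℝ) (φ : ℝ → ℝ) (W : X → ℝ) (f u : X → ℝ) : Prop :=
  EDom b m φ W f u ∧ ∀ v, EDom b m φ W f v → Efun b m φ W f u ≤ Efun b m φ W f v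

/-- The extended Dirichlet resolvent `Rh(x) = sup {Rg(x) : g ∈ C_c(X), 0 ≤ g ≤ h}`,
where for finitely supported `g` the resolvent `Rg` is the minimizer of `E_g`. -/
noncomputable def extRes (b : X → X → ℝ) (m : X → ℝ) (φ : ℝ → ℝ) (W : X → ℝ)
    (h : X → ℝ) (x : X) : ℝ≥0∞ :=
  ⨆ (g : X → ℝ) (_ : (Function.support g).Finite ∧ 0 ≤ g ∧ g ≤ h)
    (u : X → ℝ) (_ : Minimizes b m φ W g u), ENNReal.ofReal (u x)

/-- `g` is a nonnegative supersolution of `φ⁻¹(ℒg) + Wg ≥ h` in `F_φ`. -/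
def Supersol (b : X → X → ℝ) (m : X → ℝ) (φ : ℝ → ℝ) (W : X → ℝ) (h g : X → ℝ) : Prop :=
  0 ≤ g ∧ (∀ x, Summable fun y => b x y * |g y|) ∧
    (∀ x, formalLap b m g x ∈ Set.range φ) ∧
    ∀ x, h x ≤ Function.invFun φ (formalLap b m g x) + W x * g x

section

variable {b : X → X → ℝ} {f : X → ℝ}

lemma summable_mul_sub_sq_of_graphEnergy_ne_top (hnn : ∀ x y, 0 ≤ b x y)
    (hf : graphEnergy b f ≠ ⊤) (x : X) :
    Summable fun y => b x y * (f x - f y) ^ 2 := by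
  have htot : ∑' p : X × X, ENNReal.ofReal (b p.1 p.2 * (f p.1 - f p.2) ^ 2) ≠ ⊤ := by
    rintro htop
    exact hf (by rw [graphEnergy, htop, ENNReal.mul_top (by norm_num)])
  have hrow : ∑' y, ENNReal.ofReal (b x y * (f x - f y) ^ 2) ≠ ⊤ :=
    ne_top_of_le_ne_top htot <| ENNReal.tsum_comp_le_tsum_of_injective
      (f := fun y => ((x, y) : X × X)) (fun _ _ h => (Prod.mk.inj h).2) _
  convert ENNReal.summable_toReal hrow using 2 with y
  rw [ENNReal.toReal_ofReal (mul_nonneg (hnn x y) (sq_nonneg _))]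

lemma summable_mul_abs_sub_of_graphEnergy_ne_top (hnn : ∀ x y, 0 ≤ b x y)
    (hdeg : ∀ x, Summable fun y => b x y) (hf : graphEnergy b f ≠ ⊤) (x : X) :
    Summable fun y => b x y * |f x - f y| := by
  refine Summable.of_nonneg_of_le (fun y => mul_nonneg (hnn x y) (abs_nonneg _)) (fun y => ?_)
    (((hdeg x).add (summable_mul_sub_sq_of_graphEnergy_ne_top hnn hf x)).div_const 2)
  have hamgm : 2 * |f x - f y| ≤ 1 + (f x - f y) ^ 2 := by
    nlinarith [sq_nonneg (1 - |f x - f y|), sq_abs (f x - f y)]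
  nlinarith [hnn x y]

lemma summable_mul_abs_of_summable_mul_abs_sub (hnn : ∀ x y, 0 ≤ b x y)
    {x : X} (hdeg : Summable fun y => b x y)
    (hsub : Summable fun y => b x y * |f x - f y|) :
    Summable fun y => b x y * |f y| := by
  refine Summable.of_nonneg_of_le (fun y => mul_nonneg (hnn x y) (abs_nonneg _)) (fun y => ?_)
    ((hdeg.mul_right |f x|).add hsub)
  have htri : |f y| ≤ |f x| + |f x - f y| := by
    linarith [abs_sub_abs_le_abs_sub (f y) (f x), abs_sub_comm (f y) (f x)]
  nlinarith [hnn x y]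

lemma summable_mul_sub_mul_of_finite_support {ψ : X → ℝ} (hnn : ∀ x y, 0 ≤ b x y)
    (hsub : ∀ x, Summable fun y => b x y * |f x - f y|) (hψ : (Function.support ψ).Finite) :
    Summable fun p : X × X => b p.1 p.2 * (f p.1 - f p.2) * ψ p.1 := by
  refine summable_abs_iff.mp <| (summable_prod_of_nonneg fun _ => abs_nonneg _).mpr ⟨?_, ?_⟩
  · intro x
    simpa only [abs_mul, abs_of_nonneg (hnn x _)] using (hsub x).mul_right |ψ x|
  · refine summable_of_ne_finset_zero (s := hψ.toFinset) fun x hx => ?_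
    simp [Function.notMem_support.mp (mt hψ.mem_toFinset.mpr hx)]

lemma energyBil_eq_tsum_of_summable (hsym : ∀ x y, b x y = b y x) {g : X → ℝ}
    (hF : Summable fun p : X × X => b p.1 p.2 * (f p.1 - f p.2) * g p.1) :
    energyBil b f g = ∑' p : X × X, b p.1 p.2 * (f p.1 - f p.2) * g p.1 := by
  set F : X × X → ℝ := fun p => b p.1 p.2 * (f p.1 - f p.2) * g p.1
  set G : X × X → ℝ := fun p => b p.1 p.2 * (f p.1 - f p.2) * g p.2
  have hswap : G ∘ Equiv.prodComm X X = -F := by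
    ext ⟨x, y⟩
    simp only [G, F, Function.comp_apply, Equiv.prodComm_apply, Prod.swap, Pi.neg_apply, hsym y x]
    ring
  have hG : Summable G := by
    rw [← (Equiv.prodComm X X).summable_iff, hswap]
    exact hF.neg
  have hGsum : ∑' p, G p = -∑' p, F p := by
    rw [← (Equiv.prodComm X X).tsum_eq G, ← tsum_neg]
    exact congrArg tsum hswap
  have hdiff : (fun p : X × X => b p.1 p.2 * (f p.1 - f p.2) * (g p.1 - g p.2)) =
      fun p => F p - G p := by
    ext p
    simp only [F, G]
    ring
  rw [energyBil, hdiff, Summable.tsum_sub hF hG, hGsum]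
  ring

end

theorem greens_formula_general (b : X → X → ℝ)
    (hsym : ∀ x y, b x y = b y x) (hnn : ∀ x y, 0 ≤ b x y)
    (hdeg : ∀ x, Summable fun y => b x y) (m : X → ℝ) (hm : ∀ x, 0 < m x)
    (f : X → ℝ) (hf : graphEnergy b f ≠ ⊤)
    (ψ : X → ℝ) (hψ : (Function.support ψ).Finite) :
    (∀ x, Summable fun y => b x y * |f y|) ∧
      energyBil b f ψ = ∑' x, formalLap b m f x * ψ x * m x := by
  have hsub := summable_mul_abs_sub_of_graphEnergy_ne_top hnn hdeg hf
  refine ⟨fun x => summable_mul_abs_of_summable_mul_abs_sub hnn (hdeg x) (hsub x), ?_⟩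
  have hF := summable_mul_sub_mul_of_finite_support hnn hsub hψ
  rw [energyBil_eq_tsum_of_summable hsym hF, hF.tsum_prod' fun x => hF.prod_factor x]
  refine tsum_congr fun x => ?_
  change ∑' y, b x y * (f x - f y) * ψ x = _
  rw [tsum_mul_right, formalLap, div_mul_eq_mul_div, div_mul_cancel₀ _ (hm x).ne']

theorem greens_formula [Countable X] (b : X → X → ℝ)
    (hsym : ∀ x y, b x y = b y x) (hnn : ∀ x y, 0 ≤ b x y) (hdiag : ∀ x, b x x = 0)
    (hdeg : ∀ x, Summable fun y => b x y) (m : X → ℝ) (hm : ∀ x, 0 < m x)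
    (f : X → ℝ) (hf : graphEnergy b f ≠ ⊤)
    (ψ : X → ℝ) (hψ : (Function.support ψ).Finite) :
    (∀ x, Summable fun y => b x y * |f y|) ∧
      energyBil b f ψ = ∑' x, formalLap b m f x * ψ x * m x :=
  greens_formula_general b hsym hnn hdeg m hm f hf ψ hψ
end

section
/- Comparison principle I: Let b be a weighted graph over (X,m), ℒ the formal Laplacian, φ: ℝ → ℝ continuous and strictly increasing with φ(0)=0, and W: X → (0,∞). Suppose u, v: X → ℝ are in the domain F of ℒ with ℒu(x), ℒv(x) ∈ range(φ) for all x, and U ⊆ X is such that: (a) φ⁻¹(ℒu) + W u ≥ φ⁻¹(ℒv) + W v on U; (b) u − v attains a minimum on U; (c) u ≥ v on X \ U. Then u ≥ v on all of X. -/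
/-! If `u - v` had a negative minimum at `x₀ ∈ U`, then, since `u ≥ v` off `U`, it would be a
global minimum, so `ℒu(x₀) ≤ ℒv(x₀)` because the edge weights are nonnegative. As `φ⁻¹` is monotone,
hypothesis (a) then gives `W(x₀)(u - v)(x₀) ≥ 0`, a contradiction. -/

open Filter Topology
open scoped ENNReal

variable {X : Type*}

theorem summable_mul_sub_of_summable_mul_abs {ι : Type*} {w f : ι → ℝ} (hw : ∀ i, 0 ≤ w i)
    (hws : Summable w) (hf : Summable fun i => w i * |f i|) (c : ℝ) :
    Summable fun i => w i * (c - f i) := by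
  have hwf : Summable fun i => w i * f i :=
    .of_abs <| hf.congr fun i => by rw [abs_mul, abs_of_nonneg (hw i)]
  simpa only [mul_sub, mul_comm c] using (hws.mul_right c).sub hwf

theorem Function.invFun_le_invFun_of_strictMono {α β : Type*} [LinearOrder α] [Nonempty α]
    [Preorder β] {φ : α → β} (hφ : StrictMono φ) {a b : β} (ha : a ∈ Set.range φ)
    (hb : b ∈ Set.range φ) (hab : a ≤ b) : Function.invFun φ a ≤ Function.invFun φ b := by
  obtain ⟨s, rfl⟩ := ha
  obtain ⟨t, rfl⟩ := hb
  rwa [Function.leftInverse_invFun hφ.injective, Function.leftInverse_invFun hφ.injective,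
    ← hφ.le_iff_le]

theorem formalLap_le_formalLap_of_forall_sub_le {b : X → X → ℝ} {m f g : X → ℝ} {x : X}
    (hb : ∀ y, 0 ≤ b x y) (hdeg : Summable (b x)) (hm : 0 < m x)
    (hf : Summable fun y => b x y * |f y|) (hg : Summable fun y => b x y * |g y|)
    (hmin : ∀ y, f x - g x ≤ f y - g y) :
    formalLap b m f x ≤ formalLap b m g x := by
  refine div_le_div_of_nonneg_right ?_ hm.le
  refine Summable.tsum_le_tsum (fun y => ?_) (summable_mul_sub_of_summable_mul_abs hb hdeg hf _)
    (summable_mul_sub_of_summable_mul_abs hb hdeg hg _)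
  exact mul_le_mul_of_nonneg_left (by linarith [hmin y]) (hb y)

theorem comparison_principle_I_general (b : X → X → ℝ)
    (hnn : ∀ x y, 0 ≤ b x y)
    (hdeg : ∀ x, Summable fun y => b x y) (m : X → ℝ) (hm : ∀ x, 0 < m x)
    (φ : ℝ → ℝ) (hφm : StrictMono φ)
    (W : X → ℝ) (hW : ∀ x, 0 < W x)
    (u v : X → ℝ)
    (hu : ∀ x, Summable fun y => b x y * |u y|)
    (hv : ∀ x, Summable fun y => b x y * |v y|)
    (huφ : ∀ x, formalLap b m u x ∈ Set.range φ)
    (hvφ : ∀ x, formalLap b m v x ∈ Set.range φ)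
    (U : Set X)
    (ha : ∀ x ∈ U, Function.invFun φ (formalLap b m v x) + W x * v x ≤
      Function.invFun φ (formalLap b m u x) + W x * u x)
    (hb : ∃ x₀ ∈ U, ∀ y ∈ U, u x₀ - v x₀ ≤ u y - v y)
    (hc : ∀ x ∉ U, v x ≤ u x) :
    ∀ x, v x ≤ u x := by
  obtain ⟨x₀, hx₀, hmin⟩ := hb
  suffices h₀ : v x₀ ≤ u x₀ by
    intro x
    by_cases hx : x ∈ U
    · linarith [hmin x hx]
    · exact hc x hx
  by_contra! hneg
  have hglobal : ∀ y, u x₀ - v x₀ ≤ u y - v y := fun y => by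
    by_cases hy : y ∈ U
    · exact hmin y hy
    · linarith [hc y hy]
  have hLap : formalLap b m u x₀ ≤ formalLap b m v x₀ :=
    formalLap_le_formalLap_of_forall_sub_le (hnn x₀) (hdeg x₀) (hm x₀) (hu x₀) (hv x₀) hglobal
  have hinv := Function.invFun_le_invFun_of_strictMono hφm (huφ x₀) (hvφ x₀) hLap
  have hpos := mul_pos (hW x₀) (sub_pos.2 hneg)
  linarith [ha x₀ hx₀]

theorem comparison_principle_I [Countable X] (b : X → X → ℝ)
    (hsym : ∀ x y, b x y = b y x) (hnn : ∀ x y, 0 ≤ b x y) (hdiag : ∀ x, b x x = 0)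
    (hdeg : ∀ x, Summable fun y => b x y) (m : X → ℝ) (hm : ∀ x, 0 < m x)
    (φ : ℝ → ℝ) (hφm : StrictMono φ) (hφc : Continuous φ) (hφ0 : φ 0 = 0)
    (W : X → ℝ) (hW : ∀ x, 0 < W x)
    (u v : X → ℝ)
    (hu : ∀ x, Summable fun y => b x y * |u y|)
    (hv : ∀ x, Summable fun y => b x y * |v y|)
    (huφ : ∀ x, formalLap b m u x ∈ Set.range φ)
    (hvφ : ∀ x, formalLap b m v x ∈ Set.range φ)
    (U : Set X)
    (ha : ∀ x ∈ U, Function.invFun φ (formalLap b m v x) + W x * v x ≤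
      Function.invFun φ (formalLap b m u x) + W x * u x)
    (hb : ∃ x₀ ∈ U, ∀ y ∈ U, u x₀ - v x₀ ≤ u y - v y)
    (hc : ∀ x ∉ U, v x ≤ u x) :
    ∀ x, v x ≤ u x :=
  comparison_principle_I_general b hnn hdeg m hm φ hφm W hW u v hu hv huφ hvφ U ha hb hc
end

section
/- Euler–Lagrange equation for the resolvent: if u is the minimizer of the strictly convex functional E_f(v) = Q₀(v) + Σ_x Φ(f(x) − W(x)v(x)) m(x)/W(x) over its domain (with f finitely supported), then for every x ∈ X: Q(u, δ_x) = m(x) φ(f(x) − W(x)u(x)), equivalently ℒu(x) = φ(f(x) − W(x)u(x)). -/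
open Filter Topology
open scoped ENNReal

variable {X : Type*}

/-!
Perturb the minimizer along `δₓ`. As `f` is finitely supported, `E_f(u) ≤ E_f(0) < ∞`, so `u` has
finite energy and `Q(u + tδₓ) = Q(u) + 2t Q(u, δₓ) + t² Q(δₓ)` is a real quadratic, while only the
`x`-term of `κ_f` depends on `t`. Hence `t ↦ Q(u + tδₓ) + Φ(f(x) - W(x)u(x) - tW(x)) m(x)/W(x)` is
a differentiable real function minimal at `t = 0`, and its derivative there,
`2 Q(u, δₓ) - 2 m(x) φ(f(x) - W(x)u(x))`, vanishes. By symmetry of `b`,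
`Q(u, δₓ) = ∑_y b(x,y)(u(x) - u(y)) = m(x) ℒu(x)`.
-/
def edgeProd (b : X → X → ℝ) (u v : X → ℝ) (p : X × X) : ℝ :=
  b p.1 p.2 * (u p.1 - u p.2) * (v p.1 - v p.2)

lemma energyBil_eq_tsum_edgeProd (b : X → X → ℝ) (u v : X → ℝ) :
    energyBil b u v = 1 / 2 * ∑' p, edgeProd b u v p :=
  rfl

section

variable {b : X → X → ℝ} {m : X → ℝ} {φ : ℝ → ℝ} {W : X → ℝ} {f u : X → ℝ}

local notation "δ" x:max => Set.indicator ({x} : Set _) fun _ => (1 : ℝ)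

lemma edgeProd_self_nonneg (hnn : ∀ x y, 0 ≤ b x y) (p : X × X) :
    0 ≤ edgeProd b u u p := by
  rw [edgeProd, mul_assoc]
  exact mul_nonneg (hnn _ _) (mul_self_nonneg _)

lemma ofReal_edgeProd_self :
    (fun p : X × X => ENNReal.ofReal (b p.1 p.2 * (u p.1 - u p.2) ^ 2)) =
      fun p => ENNReal.ofReal (edgeProd b u u p) := by
  simp only [edgeProd, sq, mul_assoc]

lemma summable_edgeProd_of_graphEnergy_ne_top (hnn : ∀ x y, 0 ≤ b x y)
    (h : graphEnergy b u ≠ ⊤) : Summable (edgeProd b u u) := by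
  rw [graphEnergy, ofReal_edgeProd_self, ne_eq, ENNReal.mul_eq_top] at h
  have hfin : ∑' p, ENNReal.ofReal (edgeProd b u u p) ≠ ⊤ := fun h' => h (Or.inl ⟨by simp, h'⟩)
  refine (ENNReal.summable_toReal hfin).congr fun p => ?_
  exact ENNReal.toReal_ofReal (edgeProd_self_nonneg hnn p)

lemma graphEnergy_eq_ofReal (hnn : ∀ x y, 0 ≤ b x y) {c : ℝ}
    (h : HasSum (edgeProd b u u) c) : graphEnergy b u = ENNReal.ofReal (c / 2) := by
  rw [graphEnergy, ofReal_edgeProd_self,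
    ← ENNReal.ofReal_tsum_of_nonneg (edgeProd_self_nonneg hnn) h.summable, h.tsum_eq,
    div_eq_inv_mul, ENNReal.ofReal_mul (by norm_num), one_div, ENNReal.ofReal_inv_of_pos two_pos]
  norm_num

lemma HasSum.edgeProd_add_smul {v : X → ℝ} {A B C : ℝ} (hA : HasSum (edgeProd b u u) A)
    (hB : HasSum (edgeProd b u v) B) (hC : HasSum (edgeProd b v v) C) (t : ℝ) :
    HasSum (edgeProd b (u + t • v) (u + t • v)) (A + 2 * t * B + t ^ 2 * C) := by
  convert (hA.add (hB.mul_left (2 * t))).add (hC.mul_left (t ^ 2)) using 1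
  funext p
  simp only [edgeProd, Pi.add_apply, Pi.smul_apply, smul_eq_mul]
  ring

lemma summable_row_of_summable_edgeProd (hnn : ∀ x y, 0 ≤ b x y) {x : X}
    (hdeg : Summable (b x)) (h : Summable (edgeProd b u u)) :
    Summable fun y => b x y * (u x - u y) := by
  refine Summable.of_norm_bounded (((h.prod_factor x).add hdeg).div_const 2) fun y => ?_
  have hb := hnn x y
  -- `|s| ≤ (s² + 1) / 2`, weighted by `b x y`
  simp only [Real.norm_eq_abs, edgeProd, abs_mul, abs_of_nonneg hb]
  nlinarith [mul_nonneg hb (sq_nonneg (|u x - u y| - 1)), sq_abs (u x - u y)]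

/-- Testing against `δ x` only sees the edges at `x`, each of them twice. -/
lemma hasSum_edgeProd_indicator (hsym : ∀ x y, b x y = b y x) {x : X} {v : X → ℝ}
    (hv : Summable fun y => b x y * (v x - v y)) :
    HasSum (edgeProd b v (δ x)) (2 * ∑' y, b x y * (v x - v y)) := by
  classical
  set F₁ : X × X → ℝ := fun p => if p.1 = x then b x p.2 * (v x - v p.2) else 0
  set F₂ : X × X → ℝ := fun p => if p.2 = x then b p.1 x * (v x - v p.1) else 0
  have h₁ : HasSum F₁ (∑' y, b x y * (v x - v y)) := by
    refine ((Prod.mk_right_injective x).hasSum_iff ?_).mp ?_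
    · rintro ⟨p₁, p₂⟩ hp
      simp only [F₁, ite_eq_right_iff]
      rintro rfl
      exact absurd ⟨p₂, rfl⟩ hp
    · simpa [F₁, Function.comp_def] using hv.hasSum
  have h₂ : HasSum F₂ (∑' y, b x y * (v x - v y)) := by
    refine ((Prod.mk_left_injective x).hasSum_iff ?_).mp ?_
    · rintro ⟨p₁, p₂⟩ hp
      simp only [F₂, ite_eq_right_iff]
      rintro rfl
      exact absurd ⟨p₁, rfl⟩ hp
    · simpa [F₂, Function.comp_def, hsym x] using hv.hasSum
  convert h₁.add h₂ using 1
  · funext ⟨p₁, p₂⟩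
    by_cases h₁ : p₁ = x <;> by_cases h₂ : p₂ = x <;>
      simp [F₁, F₂, edgeProd, h₁, h₂, mul_neg_one, ← mul_neg]
  · ring

lemma summable_row_indicator (hnn : ∀ x y, 0 ≤ b x y) {x : X} (hdeg : Summable (b x)) :
    Summable fun y => b x y * ((δ x) x - (δ x) y) := by
  refine Summable.of_nonneg_of_le (fun y => ?_) (fun y => ?_) hdeg <;>
    by_cases hy : y = x <;> simp [hy, hnn]

lemma PhiFn_zero : PhiFn φ 0 = 0 :=
  intervalIntegral.integral_same

lemma PhiFn_nonneg (hφ : Monotone φ) (hφ0 : φ 0 = 0) (s : ℝ) : 0 ≤ PhiFn φ s := by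
  rcases le_total 0 s with hs | hs
  · exact intervalIntegral.integral_nonneg hs fun t ht => by linarith [hφ0 ▸ hφ ht.1]
  · have h := intervalIntegral.integral_nonneg (f := fun t => -(2 * φ t))
      (μ := MeasureTheory.volume) hs fun t ht => by linarith [hφ0 ▸ hφ ht.2]
    rwa [intervalIntegral.integral_neg, ← intervalIntegral.integral_symm] at h

lemma PhiFn_hasDerivAt (hφc : Continuous φ) (s : ℝ) : HasDerivAt (PhiFn φ) (2 * φ s) s :=
  ((continuous_const.mul hφc).integral_hasStrictDerivAt 0 s).hasDerivAt

lemma hasDerivAt_quadratic_add_PhiFn (hφc : Continuous φ) (A B C a w c : ℝ) :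
    HasDerivAt (fun t => (A + 2 * t * B + t ^ 2 * C) / 2 + PhiFn φ (a - t * w) * c)
      (B - 2 * φ a * w * c) 0 := by
  have hquad : HasDerivAt (fun t : ℝ => (A + 2 * t * B + t ^ 2 * C) / 2) B 0 :=
    ((((hasDerivAt_id (0 : ℝ)).const_mul 2).mul_const B |>.const_add A |>.add
      ((hasDerivAt_pow 2 (0 : ℝ)).mul_const C)).div_const 2).congr_deriv (by norm_num)
  have hPhi : HasDerivAt (fun t => PhiFn φ (a - t * w) * c) (2 * φ a * -w * c) 0 := by
    have hlin : HasDerivAt (fun t : ℝ => a - t * w) (-w) 0 := by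
      simpa using ((hasDerivAt_id (0 : ℝ)).mul_const w).const_sub a
    simpa using ((PhiFn_hasDerivAt hφc (a - 0 * w)).comp 0 hlin).mul_const c
  exact (hquad.add hPhi).congr_deriv (by ring)

lemma kappa_zero_ne_top (hf : (Function.support f).Finite) : kappa φ W m f 0 ≠ ⊤ := by
  rw [kappa, tsum_eq_sum (s := hf.toFinset) fun y hy => by
    simp [Function.notMem_support.mp (mt hf.mem_toFinset.mpr hy), PhiFn_zero]]
  exact ENNReal.sum_ne_top.mpr fun _ _ => ENNReal.ofReal_ne_top

open Classical in
lemma kappa_add_smul_indicator (x : X) (t : ℝ) :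
    kappa φ W m f (u + t • δ x) =
      ENNReal.ofReal (PhiFn φ (f x - W x * u x - t * W x) * (m x / W x)) +
        ∑' y, if y = x then 0 else ENNReal.ofReal (PhiFn φ (f y - W y * u y) * (m y / W y)) := by
  rw [kappa, ENNReal.tsum_eq_add_tsum_ite x]
  congr 2
  · congr 2
    simp only [Pi.add_apply, Pi.smul_apply, Set.indicator_of_mem (Set.mem_singleton x),
      smul_eq_mul, mul_one]
    ring
  · funext y
    split_ifs with hy
    · rfl
    · simp [hy]

lemma memD0_zero : MemD0 b 0 :=
  ⟨fun _ => 0, fun _ => by simp, fun _ => tendsto_const_nhds, by simp [graphEnergy]⟩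

lemma MemD0.add {v : X → ℝ} (hu : MemD0 b u) (hv : (Function.support v).Finite) :
    MemD0 b (u + v) := by
  obtain ⟨g, hg_fin, hg_pt, hg_energy⟩ := hu
  refine ⟨fun n => g n + v, fun n => ((hg_fin n).union hv).subset (Function.support_add _ _),
    fun x => (hg_pt x).add_const (v x), ?_⟩
  simpa using hg_energy

lemma Minimizes.graphEnergy_ne_top (hu : Minimizes b m φ W f u)
    (hf : (Function.support f).Finite) : graphEnergy b u ≠ ⊤ := by
  have hE0 : Efun b m φ W f 0 ≠ ⊤ := by
    simpa [Efun, graphEnergy] using kappa_zero_ne_top hf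
  exact ne_top_of_le_ne_top hE0
    (le_self_add.trans (hu.2 0 ⟨memD0_zero, kappa_zero_ne_top hf⟩))

lemma Minimizes.isLocalMin_line (hu : Minimizes b m φ W f u) (hnn : ∀ x y, 0 ≤ b x y)
    (hφ : Monotone φ) (hφ0 : φ 0 = 0) {x : X} (hmW : 0 ≤ m x / W x) {A B C : ℝ}
    (hA : HasSum (edgeProd b u u) A) (hB : HasSum (edgeProd b u (δ x)) B)
    (hC : HasSum (edgeProd b (δ x) (δ x)) C) :
    IsLocalMin (fun t => (A + 2 * t * B + t ^ 2 * C) / 2 +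
      PhiFn φ (f x - W x * u x - t * W x) * (m x / W x)) 0 := by
  obtain ⟨S, hκ⟩ : ∃ S, ∀ t : ℝ, kappa φ W m f (u + t • δ x) =
      ENNReal.ofReal (PhiFn φ (f x - W x * u x - t * W x) * (m x / W x)) + S :=
    ⟨_, kappa_add_smul_indicator x⟩
  have hκ₀ := hκ 0
  rw [zero_smul, add_zero] at hκ₀
  have hS : S ≠ ⊤ := (ENNReal.add_ne_top.mp (hκ₀ ▸ hu.1.2)).2
  have hquad_nonneg (t : ℝ) : 0 ≤ (A + 2 * t * B + t ^ 2 * C) / 2 :=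
    div_nonneg ((hA.edgeProd_add_smul hB hC t).nonneg (edgeProd_self_nonneg hnn)) zero_le_two
  have hE (t : ℝ) : Efun b m φ W f (u + t • δ x) = ENNReal.ofReal ((A + 2 * t * B + t ^ 2 * C) / 2 +
      PhiFn φ (f x - W x * u x - t * W x) * (m x / W x)) + S := by
    rw [Efun, graphEnergy_eq_ofReal hnn (hA.edgeProd_add_smul hB hC t), hκ, ← add_assoc,
      ENNReal.ofReal_add (hquad_nonneg t) (mul_nonneg (PhiFn_nonneg hφ hφ0 _) hmW)]
  have hdom (t : ℝ) : EDom b m φ W f (u + t • δ x) := by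
    refine ⟨hu.1.1.add ((Set.finite_singleton x).subset ?_), ?_⟩
    · exact (Function.support_const_smul_subset t _).trans Set.support_indicator_subset
    · rw [hκ]
      exact ENNReal.add_ne_top.mpr ⟨ENNReal.ofReal_ne_top, hS⟩
  have hE₀ := hE 0
  rw [zero_smul, add_zero] at hE₀
  refine Eventually.of_forall fun t => ?_
  have h := hu.2 _ (hdom t)
  rw [hE₀, hE, ENNReal.add_le_add_iff_right hS] at h
  exact (ENNReal.ofReal_le_ofReal_iff
    (add_nonneg (hquad_nonneg t) (mul_nonneg (PhiFn_nonneg hφ hφ0 _) hmW))).mp h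

end

theorem euler_lagrange_resolvent_general (b : X → X → ℝ)
    (hsym : ∀ x y, b x y = b y x) (hnn : ∀ x y, 0 ≤ b x y)
    (hdeg : ∀ x, Summable fun y => b x y) (m : X → ℝ) (hm : ∀ x, 0 < m x)
    (φ : ℝ → ℝ) (hφm : StrictMono φ) (hφc : Continuous φ) (hφ0 : φ 0 = 0)
    (W : X → ℝ) (W0 : ℝ) (hW0 : 0 < W0) (hWb : ∀ x, W0 ≤ W x)
    (f : X → ℝ) (hf : (Function.support f).Finite)
    (u : X → ℝ) (hu : Minimizes b m φ W f u) :
    ∀ x : X,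
      energyBil b u (Set.indicator {x} fun _ => (1 : ℝ)) = m x * φ (f x - W x * u x) ∧
      formalLap b m u x = φ (f x - W x * u x) := by
  intro x
  have hWx : 0 < W x := hW0.trans_le (hWb x)
  have hA := (summable_edgeProd_of_graphEnergy_ne_top hnn (hu.graphEnergy_ne_top hf)).hasSum
  have hB := hasSum_edgeProd_indicator hsym
    (summable_row_of_summable_edgeProd hnn (hdeg x) hA.summable)
  have hC := hasSum_edgeProd_indicator hsym (summable_row_indicator hnn (hdeg x))
  have hmin := hu.isLocalMin_line hnn hφm.monotone hφ0 (div_nonneg (hm x).le hWx.le) hA hB hC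
  have hL : ∑' y, b x y * (u x - u y) = m x * φ (f x - W x * u x) := by
    have h := hmin.hasDerivAt_eq_zero (hasDerivAt_quadratic_add_PhiFn hφc _ _ _ _ _ _)
    rw [mul_assoc _ (W x), mul_div_cancel₀ _ hWx.ne'] at h
    linarith
  refine ⟨?_, ?_⟩
  · rw [energyBil_eq_tsum_edgeProd, hB.tsum_eq, hL]
    ring
  · rw [formalLap, hL, mul_div_cancel_left₀ _ (hm x).ne']

theorem euler_lagrange_resolvent [Countable X] (b : X → X → ℝ)
    (hsym : ∀ x y, b x y = b y x) (hnn : ∀ x y, 0 ≤ b x y) (hdiag : ∀ x, b x x = 0)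
    (hdeg : ∀ x, Summable fun y => b x y) (m : X → ℝ) (hm : ∀ x, 0 < m x)
    (φ : ℝ → ℝ) (hφm : StrictMono φ) (hφc : Continuous φ) (hφ0 : φ 0 = 0)
    (W : X → ℝ) (W0 : ℝ) (hW0 : 0 < W0) (hWb : ∀ x, W0 ≤ W x)
    (f : X → ℝ) (hf : (Function.support f).Finite)
    (u : X → ℝ) (hu : Minimizes b m φ W f u) :
    ∀ x : X,
      energyBil b u (Set.indicator {x} fun _ => (1 : ℝ)) = m x * φ (f x - W x * u x) ∧
      formalLap b m u x = φ (f x - W x * u x) :=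
  euler_lagrange_resolvent_general b hsym hnn hdeg m hm φ hφm hφc hφ0 W W0 hW0 hWb f hf u hu
end

section
/- Positivity on finite sets: if U ⊆ X is finite and f ≥ 0 is finitely supported, then the Dirichlet resolvent R_U f on U (the unique function vanishing outside U and satisfying φ⁻¹(ℒ R_U f) + W·R_U f = f on U) is nonnegative. -/
open Filter Topology
open scoped ENNReal

variable {X : Type*}

/-! At a point where `u` attains its (global, negative) minimum every difference `u x₀ - u y` is
nonpositive, so `ℒu(x₀) ≤ 0` and hence `φ⁻¹(ℒu(x₀)) ≤ 0`; the equation at `x₀` then forces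
`f(x₀) ≤ W(x₀) u(x₀) < 0`. Such a minimum exists because `u` vanishes off the finite set `U`. -/

theorem exists_neg_forall_le_of_eq_zero_off_finite {U : Set X} (hU : U.Finite)
    {u : X → ℝ} (hout : ∀ x ∉ U, u x = 0) {x : X} (hx : u x < 0) :
    ∃ x₀ ∈ U, u x₀ < 0 ∧ ∀ y, u x₀ ≤ u y := by
  have hxU : x ∈ U := by_contra fun h => hx.ne (hout x h)
  obtain ⟨x₀, hx₀U, hx₀min⟩ := Set.exists_min_image U u hU ⟨x, hxU⟩
  have hx₀neg : u x₀ < 0 := (hx₀min x hxU).trans_lt hx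
  refine ⟨x₀, hx₀U, hx₀neg, fun y => ?_⟩
  by_cases hy : y ∈ U
  · exact hx₀min y hy
  · exact (hout y hy).symm ▸ hx₀neg.le

-- No summability is needed: a non-summable `tsum` is `0`.
theorem formalLap_nonpos_of_forall_le {b : X → X → ℝ} (hnn : ∀ x y, 0 ≤ b x y)
    {m : X → ℝ} {u : X → ℝ} {x₀ : X} (hm : 0 ≤ m x₀) (hmin : ∀ y, u x₀ ≤ u y) :
    formalLap b m u x₀ ≤ 0 :=
  div_nonpos_of_nonpos_of_nonneg
    (tsum_nonpos fun y => mul_nonpos_of_nonneg_of_nonpos (hnn x₀ y) (sub_nonpos.2 (hmin y))) hm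

theorem invFun_nonpos_of_nonpos {φ : ℝ → ℝ} (hφm : StrictMono φ) (hφ0 : φ 0 = 0) {s : ℝ}
    (hs : s ∈ Set.range φ) (hs0 : s ≤ 0) : Function.invFun φ s ≤ 0 := by
  obtain ⟨t, rfl⟩ := hs
  rw [Function.leftInverse_invFun hφm.injective t]
  exact hφm.le_iff_le.1 (hs0.trans_eq hφ0.symm)

theorem dirichlet_resolvent_nonneg_on_finite_general (b : X → X → ℝ)
    (hnn : ∀ x y, 0 ≤ b x y) (m : X → ℝ) (hm : ∀ x, 0 < m x)
    (φ : ℝ → ℝ) (hφm : StrictMono φ) (hφ0 : φ 0 = 0)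
    (W : X → ℝ) (W0 : ℝ) (hW0 : 0 < W0) (hWb : ∀ x, W0 ≤ W x)
    (U : Set X) (hU : U.Finite)
    (f : X → ℝ) (hf0 : 0 ≤ f)
    (u : X → ℝ)
    (huφ : ∀ x ∈ U, formalLap b m u x ∈ Set.range φ)
    (heq : ∀ x ∈ U, Function.invFun φ (formalLap b m u x) + W x * u x = f x)
    (hout : ∀ x ∉ U, u x = 0) :
    ∀ x, 0 ≤ u x := by
  by_contra! ⟨x, hx⟩
  obtain ⟨x₀, hx₀U, hx₀neg, hx₀min⟩ := exists_neg_forall_le_of_eq_zero_off_finite hU hout hx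
  have hinv : Function.invFun φ (formalLap b m u x₀) ≤ 0 :=
    invFun_nonpos_of_nonpos hφm hφ0 (huφ x₀ hx₀U)
      (formalLap_nonpos_of_forall_le hnn (hm x₀).le hx₀min)
  have hWu : W x₀ * u x₀ < 0 := mul_neg_of_pos_of_neg (hW0.trans_le (hWb x₀)) hx₀neg
  have hf : 0 ≤ f x₀ := hf0 x₀
  linarith [heq x₀ hx₀U]

theorem dirichlet_resolvent_nonneg_on_finite [Countable X] (b : X → X → ℝ)
    (hsym : ∀ x y, b x y = b y x) (hnn : ∀ x y, 0 ≤ b x y) (hdiag : ∀ x, b x x = 0)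
    (hdeg : ∀ x, Summable fun y => b x y) (m : X → ℝ) (hm : ∀ x, 0 < m x)
    (φ : ℝ → ℝ) (hφm : StrictMono φ) (hφc : Continuous φ) (hφ0 : φ 0 = 0)
    (W : X → ℝ) (W0 : ℝ) (hW0 : 0 < W0) (hWb : ∀ x, W0 ≤ W x)
    (U : Set X) (hU : U.Finite)
    (f : X → ℝ) (hf : (Function.support f).Finite) (hf0 : 0 ≤ f)
    (u : X → ℝ)
    (hu : ∀ x, Summable fun y => b x y * |u y|)
    (huφ : ∀ x ∈ U, formalLap b m u x ∈ Set.range φ)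
    (heq : ∀ x ∈ U, Function.invFun φ (formalLap b m u x) + W x * u x = f x)
    (hout : ∀ x ∉ U, u x = 0) :
    ∀ x, 0 ≤ u x :=
  dirichlet_resolvent_nonneg_on_finite_general b hnn m hm φ hφm hφ0 W W0 hW0 hWb U hU f hf0 u huφ
    heq hout
end

section
/- Domain monotonicity: if U ⊆ V ⊆ X are finite sets and 0 ≤ f ≤ g are finitely supported functions, then R_U f ≤ R_V g pointwise, where R_U f and R_V g are the Dirichlet resolvents on U and V respectively. -/
open Filter Topology
open scoped ENNReal

variable {X : Type*}

/-
Proof idea: a maximum principle on the finite set `V`. At a point where `u - v` attains its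
maximum, the Laplacian of `v` is at most that of `u`; since `φ⁻¹` is monotone and `W > 0`, the
equations `φ⁻¹(ℒu) + Wu = f ≤ g = φ⁻¹(ℒv) + Wv` force `u ≤ v` there, hence everywhere. Points of
`V \ U` are handled by `v ≥ 0`, which is the same argument applied to `0` and `v`.
-/

theorem StrictMono.invFun_le_invFun {φ : ℝ → ℝ} (hφ : StrictMono φ) {s t : ℝ}
    (hs : s ∈ Set.range φ) (ht : t ∈ Set.range φ) (hst : s ≤ t) :
    Function.invFun φ s ≤ Function.invFun φ t := by
  obtain ⟨a, rfl⟩ := hs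
  obtain ⟨c, rfl⟩ := ht
  rwa [Function.leftInverse_invFun hφ.injective a, Function.leftInverse_invFun hφ.injective c,
    ← hφ.le_iff_le]

theorem Set.Finite.forall_nonpos_of_isMaxOn {D : X → ℝ} {V : Set X} (hV : V.Finite)
    (hout : ∀ x ∉ V, D x ≤ 0) (hmax : ∀ x ∈ V, IsMaxOn D Set.univ x → D x ≤ 0) :
    ∀ x, D x ≤ 0 := by
  intro x
  by_contra! hx
  have hxV : x ∈ V := by_contra fun h => (hout x h).not_gt hx
  obtain ⟨x₀, hx₀V, hx₀⟩ := Set.exists_max_image V D hV ⟨x, hxV⟩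
  have hglobal : IsMaxOn D Set.univ x₀ := fun z _ => by
    by_cases hz : z ∈ V
    · exact hx₀ z hz
    · exact (hout z hz).trans (hx.le.trans (hx₀ x hxV))
  exact (hmax x₀ hx₀V hglobal).not_gt (hx.trans_le (hx₀ x hxV))

section Laplacian

variable {b : X → X → ℝ} {m : X → ℝ}

theorem summable_mul_sub_of_summable_mul_abs_s13 (hnn : ∀ x y, 0 ≤ b x y)
    (hdeg : ∀ x, Summable fun y => b x y) {w : X → ℝ} (hw : ∀ x, Summable fun y => b x y * |w y|)
    (x : X) : Summable fun y => b x y * (w x - w y) := by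
  have hbw : Summable fun y => b x y * w y :=
    .of_abs ((hw x).congr fun y => by rw [abs_mul, abs_of_nonneg (hnn x y)])
  simpa only [mul_sub] using ((hdeg x).mul_right (w x)).sub hbw

@[simp]
theorem formalLap_zero (x : X) : formalLap b m 0 x = 0 := by
  simp [formalLap]

theorem formalLap_le_formalLap_of_isMaxOn_sub (hnn : ∀ x y, 0 ≤ b x y)
    {w₁ w₂ : X → ℝ} {x : X} (hm : 0 ≤ m x)
    (hs₁ : Summable fun y => b x y * (w₁ x - w₁ y)) (hs₂ : Summable fun y => b x y * (w₂ x - w₂ y))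
    (hmax : IsMaxOn (w₁ - w₂) Set.univ x) :
    formalLap b m w₂ x ≤ formalLap b m w₁ x := by
  refine div_le_div_of_nonneg_right (hs₂.tsum_le_tsum (fun y => ?_) hs₁) hm
  have hy : w₁ y - w₂ y ≤ w₁ x - w₂ x := hmax (Set.mem_univ y)
  exact mul_le_mul_of_nonneg_left (by linarith) (hnn x y)

theorem le_of_isMaxOn_sub (hnn : ∀ x y, 0 ≤ b x y) {φ : ℝ → ℝ} (hφ : StrictMono φ)
    {W : X → ℝ} {w₁ w₂ : X → ℝ} {x : X} (hm : 0 ≤ m x) (hW : 0 < W x)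
    (hs₁ : Summable fun y => b x y * (w₁ x - w₁ y)) (hs₂ : Summable fun y => b x y * (w₂ x - w₂ y))
    (hφ₁ : formalLap b m w₁ x ∈ Set.range φ) (hφ₂ : formalLap b m w₂ x ∈ Set.range φ)
    (hsub : Function.invFun φ (formalLap b m w₁ x) + W x * w₁ x ≤
      Function.invFun φ (formalLap b m w₂ x) + W x * w₂ x)
    (hmax : IsMaxOn (w₁ - w₂) Set.univ x) :
    w₁ x ≤ w₂ x := by
  have hlap := formalLap_le_formalLap_of_isMaxOn_sub hnn hm hs₁ hs₂ hmax
  have hinv := hφ.invFun_le_invFun hφ₂ hφ₁ hlap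
  exact le_of_mul_le_mul_left (by linarith) hW

end Laplacian

theorem domain_monotonicity_general (b : X → X → ℝ)
    (hnn : ∀ x y, 0 ≤ b x y)
    (hdeg : ∀ x, Summable fun y => b x y) (m : X → ℝ) (hm : ∀ x, 0 < m x)
    (φ : ℝ → ℝ) (hφm : StrictMono φ) (hφ0 : φ 0 = 0)
    (W : X → ℝ) (W0 : ℝ) (hW0 : 0 < W0) (hWb : ∀ x, W0 ≤ W x)
    (U V : Set X) (hV : V.Finite) (hUV : U ⊆ V)
    (f g : X → ℝ)
    (hf0 : 0 ≤ f) (hfg : f ≤ g)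
    (u v : X → ℝ)
    (hu : ∀ x, Summable fun y => b x y * |u y|)
    (hv : ∀ x, Summable fun y => b x y * |v y|)
    (huφ : ∀ x ∈ U, formalLap b m u x ∈ Set.range φ)
    (hvφ : ∀ x ∈ V, formalLap b m v x ∈ Set.range φ)
    (hueq : ∀ x ∈ U, Function.invFun φ (formalLap b m u x) + W x * u x = f x)
    (hveq : ∀ x ∈ V, Function.invFun φ (formalLap b m v x) + W x * v x = g x)
    (huout : ∀ x ∉ U, u x = 0) (hvout : ∀ x ∉ V, v x = 0) :
    ∀ x, u x ≤ v x := by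
  have hW : ∀ x, 0 < W x := fun x => hW0.trans_le (hWb x)
  have hsu := summable_mul_sub_of_summable_mul_abs_s13 hnn hdeg hu
  have hsv := summable_mul_sub_of_summable_mul_abs_s13 hnn hdeg hv
  have hinv0 : Function.invFun φ 0 = 0 := by
    simpa [hφ0] using Function.leftInverse_invFun hφm.injective 0
  have hv0 : ∀ x, 0 ≤ v x := by
    have hmax₀ : ∀ x ∈ V, IsMaxOn (0 - v) Set.univ x → (0 - v) x ≤ 0 := by
      intro x hx hmax
      refine sub_nonpos.mpr (le_of_isMaxOn_sub hnn hφm (hm x).le (hW x) (by simp) (hsv x)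
        ⟨0, by simp [hφ0]⟩ (hvφ x hx) ?_ hmax)
      rw [hveq x hx, formalLap_zero, hinv0]
      simpa using (hf0 x).trans (hfg x)
    intro x
    simpa using hV.forall_nonpos_of_isMaxOn (fun x hx => by simp [hvout x hx]) hmax₀ x
  have hmax : ∀ x ∈ V, IsMaxOn (u - v) Set.univ x → (u - v) x ≤ 0 := by
    intro x _ hmax
    by_cases hxU : x ∈ U
    · refine sub_nonpos.mpr (le_of_isMaxOn_sub hnn hφm (hm x).le (hW x) (hsu x) (hsv x)
        (huφ x hxU) (hvφ x (hUV hxU)) ?_ hmax)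
      rw [hueq x hxU, hveq x (hUV hxU)]
      exact hfg x
    · simpa [huout x hxU] using hv0 x
  intro x
  simpa using hV.forall_nonpos_of_isMaxOn
    (fun x hx => by simp [huout x (fun h => hx (hUV h)), hvout x hx]) hmax x

theorem domain_monotonicity [Countable X] (b : X → X → ℝ)
    (hsym : ∀ x y, b x y = b y x) (hnn : ∀ x y, 0 ≤ b x y) (hdiag : ∀ x, b x x = 0)
    (hdeg : ∀ x, Summable fun y => b x y) (m : X → ℝ) (hm : ∀ x, 0 < m x)
    (φ : ℝ → ℝ) (hφm : StrictMono φ) (hφc : Continuous φ) (hφ0 : φ 0 = 0)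
    (W : X → ℝ) (W0 : ℝ) (hW0 : 0 < W0) (hWb : ∀ x, W0 ≤ W x)
    (U V : Set X) (hU : U.Finite) (hV : V.Finite) (hUV : U ⊆ V)
    (f g : X → ℝ) (hfs : (Function.support f).Finite) (hgs : (Function.support g).Finite)
    (hf0 : 0 ≤ f) (hfg : f ≤ g)
    (u v : X → ℝ)
    (hu : ∀ x, Summable fun y => b x y * |u y|)
    (hv : ∀ x, Summable fun y => b x y * |v y|)
    (huφ : ∀ x ∈ U, formalLap b m u x ∈ Set.range φ)
    (hvφ : ∀ x ∈ V, formalLap b m v x ∈ Set.range φ)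
    (hueq : ∀ x ∈ U, Function.invFun φ (formalLap b m u x) + W x * u x = f x)
    (hveq : ∀ x ∈ V, Function.invFun φ (formalLap b m v x) + W x * v x = g x)
    (huout : ∀ x ∉ U, u x = 0) (hvout : ∀ x ∉ V, v x = 0) :
    ∀ x, u x ≤ v x :=
  domain_monotonicity_general b hnn hdeg m hm φ hφm hφ0 W W0 hW0 hWb U V hV hUV f g hf0 hfg u v hu
    hv huφ hvφ hueq hveq huout hvout
end

section
/- Existence of a potential ensuring semi-linear stochastic completeness at infinity: Let b be any weighted graph over (X,m) and φ: ℝ → ℝ strictly increasing continuous with φ(0)=0, lim_{t→∞} φ(t) = ∞, and such that for each 0 < α ≤ 1 there is C_α > 0 with φ(αt) ≥ C_α φ(t) for all t ≥ 0. Then there exists W: X → (0,∞) with inf W > 0 such that every bounded g ≤ 0 in F_φ with φ⁻¹(ℒg) + Wg ≥ 0 vanishes identically; in fact W = φ⁻¹ ∘ (deg/m) + 1 works. -/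
open Filter Topology
open scoped ENNReal

variable {X : Type*}

/-!
Choose `W ≥ 1` with `φ(W) ≥ max(deg/m, 1)`. If a bounded `g ≤ 0` solved `φ⁻¹(ℒg) + Wg ≥ 0` without
vanishing, let `S = sup(-g) > 0` and pick `x` where `-g` is within `ε` of `S` and above a fixed
`α ∈ (0, 1]`. There `ℒg(x) ≤ ε deg(x)/m(x) ≤ ε φ(W x)`, since `g x - g y ≤ ε` for all `y`, while the
supersolution property and the scaling of `φ` give `ℒg(x) ≥ φ(α W x) ≥ C_α φ(W x)`.
Taking `ε < C_α` is absurd.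
-/

lemma Monotone.le_of_le_invFun {α β : Type*} [Preorder α] [Preorder β] [Nonempty α]
    {φ : α → β} (hφ : Monotone φ) {a : β} {t : α} (ha : a ∈ Set.range φ)
    (ht : t ≤ Function.invFun φ a) : φ t ≤ a :=
  (hφ ht).trans_eq (Function.invFun_eq ha)

lemma exists_forall_exists_almost_max {ι : Type*} {f : ι → ℝ} (hf : BddAbove (Set.range f))
    {i₀ : ι} (hi₀ : 0 < f i₀) :
    ∃ α : ℝ, 0 < α ∧ α ≤ 1 ∧ ∀ ε : ℝ, 0 < ε → ∃ i, α ≤ f i ∧ ∀ j, f j - f i ≤ ε := by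
  have hS : 0 < ⨆ i, f i := hi₀.trans_le (le_ciSup hf i₀)
  refine ⟨min ((⨆ i, f i) / 2) 1, lt_min (half_pos hS) one_pos, min_le_right _ _, fun ε hε => ?_⟩
  have : Nonempty ι := ⟨i₀⟩
  obtain ⟨i, hi⟩ : ∃ i, (⨆ i, f i) - min ε ((⨆ i, f i) / 2) < f i :=
    exists_lt_of_lt_ciSup (sub_lt_self _ (lt_min hε (half_pos hS)))
  refine ⟨i, ?_, fun j => ?_⟩
  · linarith [min_le_left ((⨆ i, f i) / 2) 1, min_le_right ε ((⨆ i, f i) / 2)]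
  · linarith [le_ciSup hf j, min_le_left ε ((⨆ i, f i) / 2)]

lemma formalLap_le_mul_of_sub_le {b : X → X → ℝ} {m g : X → ℝ} {x : X} {ε : ℝ}
    (hnn : ∀ y, 0 ≤ b x y) (hdeg : Summable (b x)) (hsum : Summable fun y => b x y * |g y|)
    (hm : 0 < m x) (hε : ∀ y, g x - g y ≤ ε) :
    formalLap b m g x ≤ ε * ((∑' y, b x y) / m x) := by
  have hbg : Summable fun y => b x y * g y :=
    hsum.of_norm_bounded fun y => by rw [Real.norm_eq_abs, abs_mul, abs_of_nonneg (hnn y)]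
  have hdiff : Summable fun y => b x y * (g x - g y) := by
    simpa only [mul_sub, mul_comm (b x _) (g x)] using (hdeg.mul_left (g x)).sub hbg
  calc formalLap b m g x ≤ (∑' y, b x y * ε) / m x :=
        div_le_div_of_nonneg_right
          (hdiff.tsum_le_tsum (fun y => mul_le_mul_of_nonneg_left (hε y) (hnn y))
            (hdeg.mul_right ε)) hm.le
    _ = ε * ((∑' y, b x y) / m x) := by rw [tsum_mul_right]; ring

theorem eq_zero_of_invFun_formalLap_add_mul_nonneg {b : X → X → ℝ} {m : X → ℝ} {φ : ℝ → ℝ}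
    {W g : X → ℝ} (hnn : ∀ x y, 0 ≤ b x y) (hdeg : ∀ x, Summable (b x)) (hm : ∀ x, 0 < m x)
    (hφ : Monotone φ)
    (hhom : ∀ α : ℝ, 0 < α → α ≤ 1 → ∃ Cα > 0, ∀ t : ℝ, 0 ≤ t → Cα * φ t ≤ φ (α * t))
    (hW : ∀ x, 0 ≤ W x) (hWφ : ∀ x, max ((∑' y, b x y) / m x) 1 ≤ φ (W x))
    (hbdd : BddAbove (Set.range fun x => -g x)) (hgle : g ≤ 0)
    (hsum : ∀ x, Summable fun y => b x y * |g y|) (hrange : ∀ x, formalLap b m g x ∈ Set.range φ)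
    (hsup : ∀ x, 0 ≤ Function.invFun φ (formalLap b m g x) + W x * g x) : g = 0 := by
  by_contra hg
  obtain ⟨x₀, hx₀⟩ := Function.ne_iff.mp hg
  obtain ⟨α, hα0, hα1, hnear⟩ :=
    exists_forall_exists_almost_max hbdd (i₀ := x₀) (neg_pos.mpr ((hgle x₀).lt_of_ne hx₀))
  obtain ⟨C, hC, hCφ⟩ := hhom α hα0 hα1
  obtain ⟨x, hαx, hxy⟩ := hnear (C / 2) (by positivity)
  have hφW : 0 < φ (W x) := one_pos.trans_le ((le_max_right _ _).trans (hWφ x))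
  refine (mul_lt_mul_of_pos_right (half_lt_self hC) hφW).not_ge ?_
  calc C * φ (W x) ≤ φ (α * W x) := hCφ _ (hW x)
    _ ≤ φ (W x * -g x) := hφ (by rw [mul_comm]; exact mul_le_mul_of_nonneg_left hαx (hW x))
    _ ≤ formalLap b m g x := hφ.le_of_le_invFun (hrange x) (by linarith [hsup x])
    _ ≤ C / 2 * ((∑' y, b x y) / m x) :=
      formalLap_le_mul_of_sub_le (hnn x) (hdeg x) (hsum x) (hm x) fun y => by linarith [hxy y]
    _ ≤ C / 2 * φ (W x) := by gcongr; exact (le_max_left _ _).trans (hWφ x)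

theorem exists_potential_liouville_general (b : X → X → ℝ)
    (hnn : ∀ x y, 0 ≤ b x y)
    (hdeg : ∀ x, Summable fun y => b x y) (m : X → ℝ) (hm : ∀ x, 0 < m x)
    (φ : ℝ → ℝ) (hφm : StrictMono φ)
    (htop : Tendsto φ atTop atTop)
    (hhom : ∀ α : ℝ, 0 < α → α ≤ 1 → ∃ Cα > 0, ∀ t : ℝ, 0 ≤ t → Cα * φ t ≤ φ (α * t)) :
    ∃ W : X → ℝ, (∃ ε > 0, ∀ x, ε ≤ W x) ∧
      ∀ g : X → ℝ, (∃ Cg : ℝ, ∀ x, |g x| ≤ Cg) → g ≤ 0 →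
        (∀ x, Summable fun y => b x y * |g y|) →
        (∀ x, formalLap b m g x ∈ Set.range φ) →
        (∀ x, 0 ≤ Function.invFun φ (formalLap b m g x) + W x * g x) → g = 0 := by
  choose W hWφ hW1 using fun x =>
    ((htop.eventually_ge_atTop (max ((∑' y, b x y) / m x) 1)).and (eventually_ge_atTop 1)).exists
  refine ⟨W, ⟨1, one_pos, hW1⟩, fun g ⟨Cg, hCg⟩ hgle hsum hrange hsup => ?_⟩
  have hbdd : BddAbove (Set.range fun x => -g x) :=
    ⟨Cg, by rintro _ ⟨x, rfl⟩; exact (neg_le_abs _).trans (hCg x)⟩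
  exact eq_zero_of_invFun_formalLap_add_mul_nonneg hnn hdeg hm hφm.monotone hhom
    (fun x => zero_le_one.trans (hW1 x)) hWφ hbdd hgle hsum hrange hsup

theorem exists_potential_liouville [Countable X] (b : X → X → ℝ)
    (hsym : ∀ x y, b x y = b y x) (hnn : ∀ x y, 0 ≤ b x y) (hdiag : ∀ x, b x x = 0)
    (hdeg : ∀ x, Summable fun y => b x y) (m : X → ℝ) (hm : ∀ x, 0 < m x)
    (φ : ℝ → ℝ) (hφm : StrictMono φ) (hφc : Continuous φ) (hφ0 : φ 0 = 0)
    (htop : Tendsto φ atTop atTop)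
    (hhom : ∀ α : ℝ, 0 < α → α ≤ 1 → ∃ Cα > 0, ∀ t : ℝ, 0 ≤ t → Cα * φ t ≤ φ (α * t)) :
    ∃ W : X → ℝ, (∃ ε > 0, ∀ x, ε ≤ W x) ∧
      ∀ g : X → ℝ, (∃ Cg : ℝ, ∀ x, |g x| ≤ Cg) → g ≤ 0 →
        (∀ x, Summable fun y => b x y * |g y|) →
        (∀ x, formalLap b m g x ∈ Set.range φ) →
        (∀ x, 0 ≤ Function.invFun φ (formalLap b m g x) + W x * g x) → g = 0 :=
  exists_potential_liouville_general b hnn hdeg m hm φ hφm htop hhom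
end
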